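/- Let n ≥ 1. For every integer j ≥ 0 and every μ ∈ ℤ^{n+1}, the unrestricted one-dimensional sum of the level-1 perfect crystal of type A_n^{(1)} satisfies, in ℤ[q,q^{−1}], q^{d+1} · g_j(n, μ) + q^{j+d+2} · g_j(0, μ + e_n − e_0) = g_j(n, μ + (d+1)·(e_0 − e_n)) + q^{j+1} · g_j(0, μ + d·(e_0 − e_n)), where d := μ_n − μ_0. (This is the case m = 1 of the Weyl-reflection identity for the affine index i = 0 and the element b = n with φ_0(n) = 1, f_0(n) = 0; the powers of q account for the imaginary-root parts of the weight shifts.) -/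

import Mathlib

open Finset

noncomputable section

/-- The indeterminate `q`, living in the field of rational functions `ℚ(q)`. -/
def q : RatFunc ℚ := RatFunc.X

/-- Energy function of the level-1 perfect crystal `B = {0,…,n}` of type `A_n^{(1)}`. -/
def H (n : ℕ) (b b' : Fin (n + 1)) : ℤ := if b' ≤ b then 1 else 0

/-- The unrestricted one-dimensional sum `g_j(b,μ)`. -/
def g (n j : ℕ) (b : Fin (n + 1)) (μ : Fin (n + 1) → ℤ) : RatFunc ℚ :=
  ∑ p ∈ Finset.univ.filter (fun p : Fin (j + 1) → Fin (n + 1) =>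
      p (Fin.last j) = b ∧
      ∀ k, ((Finset.univ.filter (fun i : Fin j => p i.castSucc = k)).card : ℤ) = μ k),
    q ^ (∑ i : Fin j, ((i : ℤ) + 1) * H n (p i.succ) (p i.castSucc))

/-- The standard basis vector `e_b` of `ℤ^{n+1}`. -/
def e (n : ℕ) (b : Fin (n + 1)) : Fin (n + 1) → ℤ := fun k => if k = b then 1 else 0

/-!
By induction on `j`, stripping the last letter of the word, `g_j(b, μ)` has the closed form
`q^(Σ_k binom(μ_k, 2) + Σ_{k ≤ b} μ_k) · [j; μ]_q` with the `q`-multinomial coefficient `[j; μ]_q`: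
the sum over the last letter `k` telescopes, because the partial sums `Σ_{l < k} μ_l` step by `μ_k`.
For `b = n` this is symmetric in `μ`, and with `ν = μ + e_n` all four arguments in the identity are
`ν - e_k` or `ν ∘ (0 n) - e_k` with `k ∈ {0, n}`. Multiplying by `1 - q^(j+1)` turns each
`[j; ν - e_k]_q` into `[j+1; ν]_q · (1 - q^(ν_k))`, leaving an identity between Laurent monomials.
-/

namespace OneDimSum

lemma q_ne_zero : q ≠ 0 := RatFunc.X_ne_zero

lemma one_sub_q_pow_ne_zero {m : ℕ} (hm : m ≠ 0) : 1 - q ^ m ≠ 0 := by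
  rw [sub_ne_zero, ne_comm, q, ← RatFunc.algebraMap_X, ← map_pow,
    ← map_one (algebraMap (Polynomial ℚ) (RatFunc ℚ)), (RatFunc.algebraMap_injective ℚ).ne_iff]
  exact fun h => hm (by simpa using congrArg Polynomial.natDegree h)

def qPochhammer (m : ℕ) : RatFunc ℚ := ∏ i ∈ range m, (1 - q ^ (i + 1))

lemma qPochhammer_succ (m : ℕ) : qPochhammer (m + 1) = qPochhammer m * (1 - q ^ (m + 1)) :=
  prod_range_succ _ m

lemma qPochhammer_ne_zero (m : ℕ) : qPochhammer m ≠ 0 :=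
  prod_ne_zero_iff.mpr fun i _ => one_sub_q_pow_ne_zero i.succ_ne_zero

section
variable {ι : Type*} [Fintype ι]

def sumChoose2 (μ : ι → ℤ) : ℤ := ∑ k, Ring.choose (μ k) 2

lemma sumChoose2_zero : sumChoose2 (0 : ι → ℤ) = 0 := by simp [sumChoose2]

lemma sumChoose2_comp_perm (σ : Equiv.Perm ι) (μ : ι → ℤ) : sumChoose2 (μ ∘ σ) = sumChoose2 μ :=
  Equiv.sum_comp σ fun k => Ring.choose (μ k) 2

lemma sumChoose2_sub_single [DecidableEq ι] (μ : ι → ℤ) (k : ι) :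
    sumChoose2 (μ - Pi.single k 1) = sumChoose2 μ - μ k + 1 := by
  have hk : Ring.choose (μ k) 2 = Ring.choose (μ k - 1) 2 + (μ k - 1) := by
    simpa [Ring.choose_one_right, add_comm] using Ring.choose_succ_succ (μ k - 1) 1
  rw [sumChoose2, sumChoose2, ← Finset.add_sum_erase _ _ (mem_univ k),
    ← Finset.add_sum_erase _ _ (mem_univ k), sum_congr rfl fun l hl => by
      rw [Pi.sub_apply, Pi.single_eq_of_ne (ne_of_mem_erase hl), sub_zero], hk]
  simp only [Pi.sub_apply, Pi.single_eq_same, mem_univ, sum_erase_eq_sub]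
  ring

/-- The `q`-multinomial coefficient `[j; μ]_q`, and `0` unless `μ` is the content of a word of
length `j`. The factors `1 - q` of the `q`-factorials cancel because `Σ_k μ_k = j`. -/
def qMultinomial (j : ℕ) (μ : ι → ℤ) : RatFunc ℚ :=
  if (∀ k, 0 ≤ μ k) ∧ ∑ k, μ k = j then qPochhammer j / ∏ k, qPochhammer (μ k).toNat else 0

lemma qMultinomial_comp_perm (j : ℕ) (σ : Equiv.Perm ι) (μ : ι → ℤ) :
    qMultinomial j (μ ∘ σ) = qMultinomial j μ := by
  unfold qMultinomial
  simp only [Function.comp_apply]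
  rw [Equiv.sum_comp σ μ, Equiv.prod_comp σ fun k => qPochhammer (μ k).toNat]
  exact if_congr (and_congr_left' (σ.forall_congr_right (q := fun k => 0 ≤ μ k))) rfl rfl

lemma qMultinomial_eq_zero_of_neg {j : ℕ} {μ : ι → ℤ} {k : ι} (hk : μ k < 0) :
    qMultinomial j μ = 0 :=
  if_neg fun h => (h.1 k).not_gt hk

lemma qMultinomial_eq_zero_of_sum_ne {j : ℕ} {μ : ι → ℤ} (hs : ∑ k, μ k ≠ j) :
    qMultinomial j μ = 0 :=
  if_neg fun h => hs h.2

lemma sum_eq_of_qMultinomial_ne_zero {j : ℕ} {μ : ι → ℤ} (h : qMultinomial j μ ≠ 0) :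
    ∑ k, μ k = j :=
  not_imp_comm.mp qMultinomial_eq_zero_of_sum_ne h

lemma qMultinomial_zero (μ : ι → ℤ) : qMultinomial 0 μ = if μ = 0 then 1 else 0 := by
  have : ((∀ k, 0 ≤ μ k) ∧ ∑ k, μ k = ((0 : ℕ) : ℤ)) ↔ μ = 0 := by
    refine ⟨fun ⟨hpos, hsum⟩ => funext fun k => ?_, fun h => by simp [h]⟩
    exact (sum_eq_zero_iff_of_nonneg fun l _ => hpos l).mp hsum k (mem_univ k)
  rw [qMultinomial, if_congr this rfl rfl]
  split_ifs with h <;> simp [h, qPochhammer]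

lemma qMultinomial_sub_single_mul [DecidableEq ι] (j : ℕ) (μ : ι → ℤ) (k : ι) :
    qMultinomial j (μ - Pi.single k 1) * (1 - q ^ (j + 1)) =
      qMultinomial (j + 1) μ * (1 - q ^ μ k) := by
  by_cases hneg : ∃ l, μ l < 0
  · obtain ⟨l, hl⟩ := hneg
    have hl' : (μ - Pi.single k 1 : ι → ℤ) l < 0 := by
      rw [Pi.sub_apply, Pi.single_apply]; split_ifs <;> omega
    rw [qMultinomial_eq_zero_of_neg hl, qMultinomial_eq_zero_of_neg hl', zero_mul, zero_mul]
  push Not at hneg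
  have hsum : ∑ l, (μ - Pi.single k 1 : ι → ℤ) l = ∑ l, μ l - 1 := by simp [sum_sub_distrib]
  by_cases hs : ∑ l, μ l = ((j + 1 : ℕ) : ℤ)
  swap
  · rw [qMultinomial_eq_zero_of_sum_ne hs,
      qMultinomial_eq_zero_of_sum_ne (by push_cast at hs ⊢; omega), zero_mul, zero_mul]
  obtain hk | hk := (hneg k).eq_or_lt
  · have hk' : (μ - Pi.single k 1 : ι → ℤ) k < 0 := by simp [← hk]
    rw [← hk, zpow_zero, sub_self, mul_zero, qMultinomial_eq_zero_of_neg hk', zero_mul]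
  have hpos : ∀ l, 0 ≤ (μ - Pi.single k 1 : ι → ℤ) l := fun l => by
    rw [Pi.sub_apply, Pi.single_apply]; split_ifs with h <;> [subst h; skip] <;> linarith [hneg l]
  have hk_succ : qPochhammer (μ k).toNat = qPochhammer (μ k - 1).toNat * (1 - q ^ μ k) := by
    rw [show (μ k).toNat = (μ k - 1).toNat + 1 by omega, qPochhammer_succ, ← zpow_natCast]
    congr 3
    omega
  have hprod : ∏ l, qPochhammer (μ l).toNat =
      (∏ l, qPochhammer ((μ - Pi.single k 1 : ι → ℤ) l).toNat) * (1 - q ^ μ k) := by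
    have hcompl : ∏ l ∈ {k}ᶜ, qPochhammer ((μ - Pi.single k 1 : ι → ℤ) l).toNat =
        ∏ l ∈ {k}ᶜ, qPochhammer (μ l).toNat :=
      prod_congr rfl fun l hl => by
        rw [Pi.sub_apply, Pi.single_eq_of_ne (by simpa using hl), sub_zero]
    rw [Fintype.prod_eq_mul_prod_compl k, Fintype.prod_eq_mul_prod_compl k, hk_succ, hcompl]
    simp only [Int.pred_toNat, Pi.sub_apply, Pi.single_eq_same]
    ring
  rw [qMultinomial, qMultinomial, if_pos ⟨hpos, by push_cast at hs; omega⟩, if_pos ⟨hneg, hs⟩,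
    hprod, qPochhammer_succ]
  have := prod_ne_zero_iff.mpr fun l (_ : l ∈ univ) =>
    qPochhammer_ne_zero ((μ - Pi.single k 1 : ι → ℤ) l).toNat
  have := right_ne_zero_of_mul (hk_succ ▸ qPochhammer_ne_zero (μ k).toNat)
  field_simp

end

section
variable {K : Type*} [Field K] {x : K} {n : ℕ}

lemma Iic_last_eq_univ : Iic (Fin.last n) = univ := by
  rw [← Fin.top_eq_last, Iic_top]

lemma sum_Iic_zpow_mul_one_sub_zpow (hx : x ≠ 0) (μ : Fin (n + 1) → ℤ) (b : Fin (n + 1)) :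
    ∑ k ∈ Iic b, x ^ (∑ l ∈ Iio k, μ l) * (1 - x ^ μ k) = 1 - x ^ (∑ l ∈ Iic b, μ l) := by
  induction b using Fin.induction with
  | zero =>
    have hIio : Iio (0 : Fin (n + 1)) = ∅ := by ext; simp
    simp [← add_sum_Iio_eq_sum_Iic, hIio]
  | succ i ih =>
    have hIio : Iio i.succ = Iic i.castSucc := by ext; simp [Fin.le_castSucc_iff]
    rw [← add_sum_Iio_eq_sum_Iic, ← add_sum_Iio_eq_sum_Iic, hIio, ih, zpow_add₀ hx]
    ring

lemma sum_zpow_H_mul_one_sub_zpow (hx : x ≠ 0) (μ : Fin (n + 1) → ℤ) (b : Fin (n + 1)) :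
    ∑ k, x ^ ((∑ l, μ l) * H n b k + ∑ l ∈ Iio k, μ l) * (1 - x ^ μ k) =
      x ^ (∑ l ∈ Iic b, μ l) * (1 - x ^ ∑ l, μ l) := by
  set S := ∑ l, μ l
  have hH : ∀ k, x ^ (S * H n b k) = 1 + if k ∈ Iic b then x ^ S - 1 else 0 := fun k => by
    by_cases hk : k ≤ b <;> simp [H, hk]
  have htotal := sum_Iic_zpow_mul_one_sub_zpow hx μ (Fin.last n)
  rw [Iic_last_eq_univ] at htotal
  simp only [zpow_add₀ hx, hH, add_mul, one_mul, mul_assoc, sum_add_distrib, ite_mul, zero_mul,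
    sum_ite_mem, univ_inter, ← mul_sum, htotal, sum_Iic_zpow_mul_one_sub_zpow hx]
  ring

end

section

def content {ι α : Type*} [Fintype ι] [DecidableEq α] (w : ι → α) (a : α) : ℤ :=
  (univ.filter fun i => w i = a).card

/-- The exponent of `q` in `g`, for the word `p = (b_1, …, b_{j+1})` stored as `p i = b_{i+1}`. -/
def energy (n : ℕ) {j : ℕ} (p : Fin (j + 1) → Fin (n + 1)) : ℤ :=
  ∑ i : Fin j, ((i : ℤ) + 1) * H n (p i.succ) (p i.castSucc)

variable {n j : ℕ}

lemma g_eq_sum_content (b : Fin (n + 1)) (μ : Fin (n + 1) → ℤ) :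
    g n j b μ = ∑ w : Fin j → Fin (n + 1) with content w = μ, q ^ energy n (Fin.snoc w b) := by
  refine sum_nbij' Fin.init (fun w => Fin.snoc w b) ?_ ?_ ?_ ?_ ?_
  · intro p hp
    simp only [mem_filter, mem_univ, true_and] at hp ⊢
    exact funext hp.2
  · intro w hw
    simp only [mem_filter, mem_univ, true_and] at hw ⊢
    exact ⟨Fin.snoc_last _ _, fun k => by simpa [content] using congrFun hw k⟩
  · intro p hp
    simp only [mem_filter, mem_univ, true_and] at hp
    simp [← hp.1]
  · exact fun w _ => Fin.init_snoc _ _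
  · intro p hp
    simp only [mem_filter, mem_univ, true_and] at hp
    rw [← hp.1, Fin.snoc_init_self]
    rfl

lemma content_snoc (w : Fin j → Fin (n + 1)) (k : Fin (n + 1)) :
    content (Fin.snoc w k : Fin (j + 1) → Fin (n + 1)) = content w + Pi.single k 1 := by
  ext l
  simp only [content, card_filter, Fin.sum_univ_castSucc, Fin.snoc_castSucc, Fin.snoc_last,
    Pi.add_apply, Pi.single_apply]
  push_cast
  simp [eq_comm]

lemma energy_snoc (p : Fin (j + 1) → Fin (n + 1)) (b : Fin (n + 1)) :
    energy n (Fin.snoc p b : Fin (j + 2) → Fin (n + 1)) =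
      energy n p + ((j : ℤ) + 1) * H n b (p (Fin.last j)) := by
  rw [energy, Fin.sum_univ_castSucc, energy]
  simp only [Fin.succ_castSucc, Fin.snoc_castSucc, Fin.succ_last, Fin.snoc_last, Fin.val_castSucc,
    Fin.val_last]

lemma g_length_zero (b : Fin (n + 1)) (μ : Fin (n + 1) → ℤ) :
    g n 0 b μ = if μ = 0 then 1 else 0 := by
  have hw : ∀ w : Fin 0 → Fin (n + 1), content w = 0 := fun w => by ext; simp [content]
  by_cases h : μ = 0 <;> simp [g_eq_sum_content, energy, hw, h, eq_comm]

lemma g_length_succ (b : Fin (n + 1)) (μ : Fin (n + 1) → ℤ) :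
    g n (j + 1) b μ = ∑ k, q ^ (((j : ℤ) + 1) * H n b k) * g n j k (μ - Pi.single k 1) := by
  simp only [g_eq_sum_content, sum_filter, mul_sum]
  rw [← (Fin.snocEquiv fun _ => Fin (n + 1)).sum_comp, Fintype.sum_prod_type]
  refine sum_congr rfl fun k _ => sum_congr rfl fun w _ => ?_
  simp only [Fin.snocEquiv, Equiv.coe_fn_mk, content_snoc, energy_snoc, eq_sub_iff_add_eq,
    zpow_add₀ q_ne_zero, Fin.snoc_last]
  split_ifs <;> ring

theorem g_eq_zpow_mul_qMultinomial (j : ℕ) (b : Fin (n + 1)) (μ : Fin (n + 1) → ℤ) :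
    g n j b μ = q ^ (sumChoose2 μ + ∑ k ∈ Iic b, μ k) * qMultinomial j μ := by
  induction j generalizing b μ with
  | zero =>
    rw [g_length_zero, qMultinomial_zero]
    split_ifs with h <;> simp [h, sumChoose2_zero]
  | succ j ih =>
    have hterm : ∀ k, q ^ (((j : ℤ) + 1) * H n b k) * g n j k (μ - Pi.single k 1) *
        (1 - q ^ (j + 1)) = q ^ sumChoose2 μ * qMultinomial (j + 1) μ *
          (q ^ (((j + 1 : ℕ) : ℤ) * H n b k + ∑ l ∈ Iio k, μ l) * (1 - q ^ μ k)) := fun k => by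
      have hexp : sumChoose2 (μ - Pi.single k 1) + ∑ l ∈ Iic k, (μ - Pi.single k 1 : _ → ℤ) l =
          sumChoose2 μ + ∑ l ∈ Iio k, μ l := by
        simp only [sumChoose2_sub_single, Pi.sub_apply, sum_sub_distrib, sum_pi_single',
          mem_Iic, le_refl, if_true, ← add_sum_Iio_eq_sum_Iic]
        ring
      rw [ih, hexp, mul_assoc, mul_assoc, qMultinomial_sub_single_mul,
        zpow_add₀ q_ne_zero, zpow_add₀ q_ne_zero]
      push_cast
      ring
    apply mul_right_cancel₀ (one_sub_q_pow_ne_zero (Nat.add_one_ne_zero j))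
    rw [g_length_succ, sum_mul, sum_congr rfl fun k _ => hterm k, ← mul_sum]
    obtain hQ | hQ := eq_or_ne (qMultinomial (j + 1) μ) 0
    · simp [hQ]
    have hsum := sum_eq_of_qMultinomial_ne_zero hQ
    rw [← hsum, sum_zpow_H_mul_one_sub_zpow q_ne_zero, hsum, zpow_add₀ q_ne_zero, zpow_natCast]
    ring

lemma g_last_sub_single_mul (j : ℕ) (ν : Fin (n + 1) → ℤ) (k : Fin (n + 1)) :
    g n j (Fin.last n) (ν - Pi.single k 1) * (1 - q ^ (j + 1)) =
      q ^ (sumChoose2 ν + ∑ l, ν l - ν k) * (1 - q ^ ν k) * qMultinomial (j + 1) ν := by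
  rw [g_eq_zpow_mul_qMultinomial, Iic_last_eq_univ, mul_assoc, qMultinomial_sub_single_mul,
    sumChoose2_sub_single]
  simp only [Pi.sub_apply, sum_sub_distrib, sum_pi_single', if_pos (mem_univ k)]
  ring_nf

lemma g_zero_sub_single_zero_mul (j : ℕ) (ν : Fin (n + 1) → ℤ) :
    g n j 0 (ν - Pi.single 0 1) * (1 - q ^ (j + 1)) =
      q ^ sumChoose2 ν * (1 - q ^ ν 0) * qMultinomial (j + 1) ν := by
  have hIic : Iic (0 : Fin (n + 1)) = {0} := by ext; simp
  rw [g_eq_zpow_mul_qMultinomial, hIic, sum_singleton, mul_assoc, qMultinomial_sub_single_mul,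
    sumChoose2_sub_single]
  simp only [Pi.sub_apply, Pi.single_eq_same, add_add_sub_cancel, sub_add_cancel]
  ring_nf

end

section
variable {ι : Type*} [DecidableEq ι] {a b : ι}

lemma add_smul_eq_comp_swap_sub_single (hab : a ≠ b) (μ : ι → ℤ) :
    μ + (μ b - μ a) • (Pi.single a 1 - Pi.single b 1) =
      (μ + Pi.single b 1) ∘ Equiv.swap a b - Pi.single a 1 := by
  ext l
  obtain rfl | hla := eq_or_ne l a
  · simp [hab]
  obtain rfl | hlb := eq_or_ne l b
  · simp [hab]
  simp [Equiv.swap_apply_of_ne_of_ne hla hlb, hla, hlb]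

lemma add_smul_add_one_eq_comp_swap_sub_single (hab : a ≠ b) (μ : ι → ℤ) :
    μ + (μ b - μ a + 1) • (Pi.single a 1 - Pi.single b 1) =
      (μ + Pi.single b 1) ∘ Equiv.swap a b - Pi.single b 1 := by
  rw [add_smul, one_smul, ← add_assoc, add_smul_eq_comp_swap_sub_single hab]
  abel

end

lemma e_eq_single (n : ℕ) (b : Fin (n + 1)) : e n b = Pi.single b 1 := by
  ext k
  simp [e, Pi.single_apply]

end OneDimSum

open OneDimSum

/-- the `m = 1` case of the Weyl-reflection identity for the affine index
`i = 0` and the element `b = n` (with `φ_0(n) = 1`, `f_0(n) = 0`): with `d = μ_n - μ_0`,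
`q^{d+1}·g_j(n,μ) + q^{j+d+2}·g_j(0, μ+e_n-e_0)
  = g_j(n, μ+(d+1)(e_0-e_n)) + q^{j+1}·g_j(0, μ+d(e_0-e_n))`. -/
theorem statement10 (n : ℕ) (hn : 1 ≤ n) (j : ℕ) (μ : Fin (n + 1) → ℤ) :
    q ^ (μ (Fin.last n) - μ 0 + 1) * g n j (Fin.last n) μ +
      q ^ ((j : ℤ) + (μ (Fin.last n) - μ 0) + 2) *
        g n j 0 (μ + e n (Fin.last n) - e n 0) =
    g n j (Fin.last n)
        (μ + (μ (Fin.last n) - μ 0 + 1) • (e n 0 - e n (Fin.last n))) +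
      q ^ ((j : ℤ) + 1) *
        g n j 0 (μ + (μ (Fin.last n) - μ 0) • (e n 0 - e n (Fin.last n))) := by
  have h0 : (0 : Fin (n + 1)) ≠ Fin.last n := by
    rw [Ne, Fin.ext_iff, Fin.val_zero, Fin.val_last]
    omega
  simp only [e_eq_single]
  rw [add_smul_add_one_eq_comp_swap_sub_single h0, add_smul_eq_comp_swap_sub_single h0]
  obtain ⟨ν, rfl⟩ : ∃ ν, μ = ν - Pi.single (Fin.last n) 1 :=
    ⟨μ + Pi.single (Fin.last n) 1, by simp⟩
  apply mul_right_cancel₀ (one_sub_q_pow_ne_zero (Nat.add_one_ne_zero j))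
  simp only [sub_add_cancel, add_mul, mul_assoc, g_last_sub_single_mul, g_zero_sub_single_zero_mul,
    sumChoose2_comp_perm, qMultinomial_comp_perm, Equiv.sum_comp, Function.comp_apply,
    Equiv.swap_apply_left, Equiv.swap_apply_right]
  obtain hQ | hQ := eq_or_ne (qMultinomial (j + 1) ν) 0
  · simp [hQ]
  rw [sum_eq_of_qMultinomial_ne_zero hQ]
  simp only [Pi.sub_apply, Pi.single_eq_same, ne_eq, h0, not_false_eq_true, Pi.single_eq_of_ne,
    sub_zero, zpow_add₀ q_ne_zero, zpow_sub₀ q_ne_zero, zpow_ofNat, pow_one, Nat.cast_add,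
    Nat.cast_one, zpow_natCast]
  have := q_ne_zero
  field_simp
  ring

end
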